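/- arXiv:1110.3898 — 10 statements merged into one kernel-verified Lean document; each statement's English description precedes it below -/
import Mathlib

section
/- Let τ = ⌊(n−k)/2⌋. Let f ∈ F[x] with deg f < k, let c = (υ'_1 f(α_1),…,υ'_n f(α_n)) and let r = c + e be a received word where the error vector e has Hamming weight at most τ. Suppose Q(x,y) = Q^(0)(x) + Q^(1)(x)·y is a nonzero bivariate polynomial such that Q^(0)(α_i) + Q^(1)(α_i)·(r_i/υ'_i) = 0 for all i ∈ {1,…,n}, deg Q^(0) < n−τ and deg Q^(1) < n−τ−(k−1). Then Q^(1) ≠ 0 and Q^(0)(x) + Q^(1)(x)·f(x) = 0, i.e., f(x) = −Q^(0)(x)/Q^(1)(x). -/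
open Polynomial
open scoped Classical

/-- Welch–Berlekamp list-one decoder: if the error weight is at most
`τ = ⌊(n-k)/2⌋` and `Q(x,y) = Q⁰(x) + Q¹(x)·y` is a nonzero bivariate polynomial
vanishing at all points `(αᵢ, rᵢ/υ'ᵢ)` with the prescribed degree bounds, then
`Q¹ ≠ 0` and `Q⁰ + Q¹·f = 0`, i.e. `f = −Q⁰/Q¹`. -/
theorem welch_berlekamp_list_one
    (F : Type*) [Field F] (n k : ℕ) (hk : 1 ≤ k) (hkn : k ≤ n)
    (α υ' : Fin n → F) (hα : Function.Injective α) (hα0 : ∀ i, α i ≠ 0)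
    (hυ' : ∀ i, υ' i ≠ 0)
    (τ : ℕ) (hτ : τ = (n - k) / 2)
    (f : F[X]) (hf : f.degree < (k : ℕ))
    (e r : Fin n → F)
    (he : (Finset.univ.filter fun i => e i ≠ 0).card ≤ τ)
    (hr : ∀ i, r i = υ' i * f.eval (α i) + e i)
    (Q0 Q1 : F[X]) (hQ : ¬(Q0 = 0 ∧ Q1 = 0))
    (hint : ∀ i, Q0.eval (α i) + Q1.eval (α i) * (r i / υ' i) = 0)
    (hd0 : Q0.degree < ((n - τ : ℕ) : WithBot ℕ))
    (hd1 : Q1.degree < ((n - τ - (k - 1) : ℕ) : WithBot ℕ)) :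
    Q1 ≠ 0 ∧ Q0 + Q1 * f = 0 := by
  have hτk : τ + k ≤ n := by omega
  set P : F[X] := Q0 + Q1 * f with hP
  -- degree bound for P
  have hdegP : P.degree < ((n - τ : ℕ) : WithBot ℕ) := by
    have h1 : (Q1 * f).degree < ((n - τ : ℕ) : WithBot ℕ) := by
      rcases eq_or_ne Q1 0 with h | h
      · simp [h]
      rcases eq_or_ne f 0 with hf0 | hf0
      · simp [hf0]
      have hQ1d : Q1.natDegree < n - τ - (k - 1) := by
        rwa [← Polynomial.natDegree_lt_iff_degree_lt h] at hd1
      have hfd : f.natDegree < k := by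
        rwa [← Polynomial.natDegree_lt_iff_degree_lt hf0] at hf
      have : (Q1 * f).natDegree < n - τ := by
        rw [Polynomial.natDegree_mul h hf0]
        omega
      rwa [Polynomial.natDegree_lt_iff_degree_lt (mul_ne_zero h hf0)] at this
    calc P.degree ≤ max Q0.degree (Q1 * f).degree := Polynomial.degree_add_le _ _
      _ < _ := max_lt hd0 h1
  -- good set
  set S : Finset (Fin n) := Finset.univ.filter (fun i => e i = 0) with hS
  have hScard : n - τ ≤ S.card := by
    have := Finset.card_filter_add_card_filter_not
      (s := (Finset.univ : Finset (Fin n))) (p := fun i => e i = 0)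
    simp only [Finset.card_univ, Fintype.card_fin] at this
    have h2 : (Finset.univ.filter fun i => ¬ e i = 0).card ≤ τ := by
      simpa using he
    have h3 : S.card = (Finset.univ.filter fun i => e i = 0).card := rfl
    omega
  -- P vanishes on α '' S
  have heval : ∀ x ∈ S.image α, P.eval x = 0 := by
    intro x hx
    obtain ⟨i, hi, rfl⟩ := Finset.mem_image.mp hx
    have hei : e i = 0 := by simpa [hS] using hi
    have hri : r i / υ' i = f.eval (α i) := by
      rw [hr i, hei, add_zero, mul_comm, mul_div_assoc, div_self (hυ' i), mul_one]
    have := hint i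
    rw [hri] at this
    simpa [hP] using this
  have hPzero : P = 0 := by
    rcases eq_or_ne P 0 with h | h
    · exact h
    apply Polynomial.eq_zero_of_natDegree_lt_card_of_eval_eq_zero' P (S.image α) heval
    have hcard : (S.image α).card = S.card := Finset.card_image_of_injective _ hα
    have : P.natDegree < n - τ := by
      rwa [← Polynomial.natDegree_lt_iff_degree_lt h] at hdegP
    omega
  refine ⟨?_, hPzero⟩
  intro hQ1
  apply hQ
  refine ⟨?_, hQ1⟩
  have := hPzero
  rw [hP, hQ1, zero_mul, add_zero] at this
  exact this
end

section
/- Let τ = ⌊(n−k)/2⌋ and let Q(x,y) = Q^(0)(x) + Q^(1)(x)·y with deg Q^(0) < n−τ and deg Q^(1) < n−τ−(k−1). Then Q^(0)(α_i) + Q^(1)(α_i)·(r_i/υ'_i) = 0 for all i ∈ {1,…,n} if and only if there exists a polynomial B ∈ F[x] with deg B < n−k−τ such that Q^(0)(x) + Q^(1)(x)·R(x) = B(x)·G(x). -/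
open Polynomial

/-- Univariate reformulation of the Welch–Berlekamp interpolation conditions:
`Q⁰(αᵢ) + Q¹(αᵢ)·(rᵢ/υ'ᵢ) = 0` for all `i` holds iff there is `B` with
`deg B < n−k−τ` and `Q⁰ + Q¹·R = B·G`. -/
theorem welch_berlekamp_univariate_reformulation
    (F : Type*) [Field F] (n k : ℕ) (hk : 1 ≤ k) (hkn : k ≤ n)
    (α υ' : Fin n → F) (hα : Function.Injective α) (hα0 : ∀ i, α i ≠ 0)
    (hυ' : ∀ i, υ' i ≠ 0)
    (τ : ℕ) (hτ : τ = (n - k) / 2)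
    (r : Fin n → F)
    (G : F[X]) (hG : G = ∏ i, (X - C (α i)))
    (R : F[X]) (hRdeg : R.degree < (n : ℕ))
    (hR : ∀ i, R.eval (α i) = r i / υ' i)
    (Q0 Q1 : F[X])
    (hd0 : Q0.degree < ((n - τ : ℕ) : WithBot ℕ))
    (hd1 : Q1.degree < ((n - τ - (k - 1) : ℕ) : WithBot ℕ)) :
    (∀ i, Q0.eval (α i) + Q1.eval (α i) * (r i / υ' i) = 0) ↔
      ∃ B : F[X], B.degree < ((n - k - τ : ℕ) : WithBot ℕ) ∧
        Q0 + Q1 * R = B * G := by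

  have hτn : τ ≤ n - k := hτ ▸ Nat.div_le_self _ _
  set p : F[X] := Q0 + Q1 * R with hp
  have hGmonic : G.Monic := by
    rw [hG]; exact monic_prod_of_monic _ _ fun i _ => monic_X_sub_C _
  have hG0 : G ≠ 0 := hGmonic.ne_zero
  have hGdeg : G.natDegree = n := by
    rw [hG, natDegree_prod _ _ fun i _ => X_sub_C_ne_zero _]
    simp [natDegree_X_sub_C]
  have hGeval : ∀ i, G.eval (α i) = 0 := by
    intro i
    rw [hG, eval_prod]
    exact Finset.prod_eq_zero (Finset.mem_univ i) (by simp)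
  constructor
  · intro h
    have hroot : ∀ i, p.eval (α i) = 0 := by
      intro i
      have := h i
      rw [← hR i] at this
      simpa [hp] using this
    have hdvd : G ∣ p := by
      rw [hG]
      exact Fintype.prod_dvd_of_coprime (pairwise_coprime_X_sub_C hα)
        fun i => dvd_iff_isRoot.2 (hroot i)
    obtain ⟨B, hB⟩ := hdvd
    refine ⟨B, ?_, by rw [hB, mul_comm]⟩
    by_cases hB0 : B = 0
    · rw [hB0, degree_zero]
      exact WithBot.bot_lt_coe _
    have hp0 : p ≠ 0 := by
      rw [hB]
      exact mul_ne_zero hG0 hB0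
    rw [← natDegree_lt_iff_degree_lt hB0]
    have hpdeg : p.natDegree = n + B.natDegree := by
      rw [hB, natDegree_mul hG0 hB0, hGdeg]
    have hn1 : 1 ≤ n := le_trans hk hkn
    have hQ0 : Q0.natDegree < n + (n - k - τ) := by
      by_cases h0 : Q0 = 0
      · simp [h0]; omega
      · have := (natDegree_lt_iff_degree_lt h0).2 hd0
        omega
    have hQ1R : (Q1 * R).natDegree < n + (n - k - τ) := by
      by_cases h1 : Q1 = 0
      · simp [h1]; omega
      by_cases h2 : R = 0
      · simp [h2]; omega
      have hq1 := (natDegree_lt_iff_degree_lt h1).2 hd1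
      have hr : R.natDegree < n := (natDegree_lt_iff_degree_lt h2).2 hRdeg
      rw [natDegree_mul h1 h2]
      omega
    have : p.natDegree < n + (n - k - τ) :=
      lt_of_le_of_lt (natDegree_add_le _ _) (max_lt hQ0 hQ1R)
    omega
  · rintro ⟨B, hBdeg, hBeq⟩ i
    have := congrArg (eval (α i)) hBeq
    simp only [hp, eval_add, eval_mul, hGeval i, mul_zero, hR i] at this
    exact this
end

section
/- Let τ = ⌊(n−k)/2⌋ and N_t = n−τ−t(k−1) for t = 0,1. Suppose Q^(0), Q^(1) ∈ F[x] with deg Q^(t) < N_t and B ∈ F[x] with deg B < n−k−τ satisfy Q^(0)(x) + Q^(1)(x)·R(x) = B(x)·G(x). Let Λ^(1)(x) = x^{N_1−1}·Q^(1)(1/x), Ω(x) = x^{n−k−τ−1}·B(1/x), and let S(x) ∈ F[[x]] be the formal power series R̄(x)/Ḡ(x), where R̄(x) = x^{n−1}·R(1/x) and Ḡ(x) = ∏_{i=1}^n (1−α_i x) (which has Ḡ(0) = 1 and is hence invertible in F[[x]]). Then the Key Equation S(x)·Λ^(1)(x) ≡ Ω(x) (mod x^{n−k}) holds, i.e.,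 the coefficients of x^0,…,x^{n−k−1} of S(x)·Λ^(1)(x) − Ω(x) all vanish. -/
open Polynomial

/-!
Reversing the Welch–Berlekamp identity `Q₀ + Q₁·R = B·G` at degree `2n − τ − k − 1` turns
it into `Q̄₀·xⁿ⁻ᵏ + Λ¹·R̄ = Ω·Ḡ`; the bound `deg Q₀ < n − τ` is exactly what makes `Q₀`
reappear multiplied by `xⁿ⁻ᵏ`. Since `Ḡ(0) = 1`, dividing by `Ḡ` in `F⟦X⟧` gives
`S·Λ¹ − Ω = −Q̄₀·Ḡ⁻¹·xⁿ⁻ᵏ`, which vanishes modulo `xⁿ⁻ᵏ`.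
-/

namespace Polynomial

variable {A : Type*} [Semiring A]

theorem natDegree_le_sub_one_of_degree_lt {p : A[X]} {m : ℕ} (hm : 1 ≤ m)
    (hp : p.degree < m) : p.natDegree ≤ m - 1 := by
  rcases eq_or_ne p 0 with rfl | hp0
  · simp
  · have := (natDegree_lt_iff_degree_lt hp0).mpr hp
    omega

theorem reflect_add_eq_reflect_mul_X_pow {p : A[X]} {N : ℕ} (hp : p.natDegree ≤ N) (d : ℕ) :
    p.reflect (N + d) = p.reflect N * X ^ d := by
  simpa [reflect_one] using reflect_mul p (1 : A[X]) hp (natDegree_one.trans_le d.zero_le)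

theorem reflect_add_mul_eq_mul_of_add_mul_eq_mul {Q₀ Q₁ P B G : A[X]} {a b c d e m : ℕ}
    (h : Q₀ + Q₁ * P = B * G) (hQ₀ : Q₀.natDegree ≤ a) (hQ₁ : Q₁.natDegree ≤ b)
    (hP : P.natDegree ≤ c) (hB : B.natDegree ≤ e) (hG : G.natDegree ≤ m)
    (had : a + d = b + c) (hem : e + m = b + c) :
    Q₀.reflect a * X ^ d + Q₁.reflect b * P.reflect c = B.reflect e * G.reflect m := by
  have hQ₀' : Q₀.reflect (b + c) = Q₀.reflect a * X ^ d :=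
    had ▸ reflect_add_eq_reflect_mul_X_pow hQ₀ d
  have hBG : (B * G).reflect (b + c) = B.reflect e * G.reflect m := hem ▸ reflect_mul _ _ hB hG
  have h' := congrArg (reflect (b + c)) h
  rwa [reflect_add, reflect_mul _ _ hQ₁ hP, hQ₀', hBG] at h'

end Polynomial

theorem PowerSeries.X_pow_dvd_mul_inv_mul_sub {K : Type*} [Field K] {a b c e g : PowerSeries K}
    {m : ℕ} (hg : constantCoeff g ≠ 0) (h : a * PowerSeries.X ^ m + b * c = e * g) :
    PowerSeries.X ^ m ∣ c * g⁻¹ * b - e :=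
  ⟨-(a * g⁻¹), by linear_combination g⁻¹ * h + e * PowerSeries.mul_inv_cancel g hg⟩

theorem key_equation_from_welch_berlekamp_general
    (F : Type*) [Field F] (n k : ℕ) (hk : 1 ≤ k)
    (α : Fin n → F)
    (τ : ℕ) (hτ : τ = (n - k) / 2)
    (G : F[X]) (hG : G = ∏ i, (X - C (α i)))
    (R : F[X]) (hRdeg : R.degree < (n : ℕ))
    (Q0 Q1 B : F[X])
    (hd0 : Q0.degree < ((n - τ : ℕ) : WithBot ℕ))
    (hd1 : Q1.degree < ((n - τ - (k - 1) : ℕ) : WithBot ℕ))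
    (hdB : B.degree < ((n - k - τ : ℕ) : WithBot ℕ))
    (heq : Q0 + Q1 * R = B * G) :
    ∀ i < n - k,
      PowerSeries.coeff i
        ((R.reflect (n - 1) : PowerSeries F) * (G.reflect n : PowerSeries F)⁻¹ *
            (Q1.reflect (n - τ - (k - 1) - 1) : PowerSeries F) -
          (B.reflect (n - k - τ - 1) : PowerSeries F)) = 0 := by
  intro i hi
  have hτlt : τ < n - k := by omega
  have hGmonic : G.Monic := hG ▸ monic_prod_X_sub_C α Finset.univ
  have hGdeg : G.natDegree = n := by simp [hG]
  have key := reflect_add_mul_eq_mul_of_add_mul_eq_mul heq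
    (natDegree_le_sub_one_of_degree_lt (by omega) hd0)
    (natDegree_le_sub_one_of_degree_lt (by omega) hd1)
    (natDegree_le_sub_one_of_degree_lt (by omega) hRdeg)
    (natDegree_le_sub_one_of_degree_lt (by omega) hdB) hGdeg.le
    (d := n - k) (by omega) (by omega)
  have hG0 : PowerSeries.constantCoeff (G.reflect n : PowerSeries F) ≠ 0 := by
    rw [constantCoeff_coe, ← hGdeg, ← reverse, coeff_zero_reverse,
      hGmonic.leadingCoeff]
    exact one_ne_zero
  refine PowerSeries.X_pow_dvd_iff.mp
    (PowerSeries.X_pow_dvd_mul_inv_mul_sub (a := Q0.reflect (n - τ - 1)) hG0 ?_) i hi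
  simpa only [coe_add, coe_mul, coe_pow, coe_X] using congrArg ((↑) : F[X] → PowerSeries F) key

/-- The classical Key Equation `S(x)·Λ¹(x) ≡ Ω(x) (mod x^{n−k})`, where
`S = R̄/Ḡ` is the syndrome power series, `Λ¹ = x^{N₁−1}·Q¹(1/x)` and
`Ω = x^{n−k−τ−1}·B(1/x)`: the coefficients of `x^0,…,x^{n−k−1}` of
`S·Λ¹ − Ω` all vanish. -/
theorem key_equation_from_welch_berlekamp
    (F : Type*) [Field F] (n k : ℕ) (hk : 1 ≤ k) (hkn : k ≤ n)
    (α υ' : Fin n → F) (hα : Function.Injective α) (hα0 : ∀ i, α i ≠ 0)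
    (hυ' : ∀ i, υ' i ≠ 0)
    (τ : ℕ) (hτ : τ = (n - k) / 2)
    (r : Fin n → F)
    (G : F[X]) (hG : G = ∏ i, (X - C (α i)))
    (R : F[X]) (hRdeg : R.degree < (n : ℕ))
    (hR : ∀ i, R.eval (α i) = r i / υ' i)
    (Q0 Q1 B : F[X])
    (hd0 : Q0.degree < ((n - τ : ℕ) : WithBot ℕ))
    (hd1 : Q1.degree < ((n - τ - (k - 1) : ℕ) : WithBot ℕ))
    (hdB : B.degree < ((n - k - τ : ℕ) : WithBot ℕ))
    (heq : Q0 + Q1 * R = B * G) :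
    ∀ i < n - k,
      PowerSeries.coeff i
        ((R.reflect (n - 1) : PowerSeries F) * (G.reflect n : PowerSeries F)⁻¹ *
            (Q1.reflect (n - τ - (k - 1) - 1) : PowerSeries F) -
          (B.reflect (n - k - τ - 1) : PowerSeries F)) = 0 :=
  key_equation_from_welch_berlekamp_general F n k hk α τ hτ G hG R hRdeg Q0 Q1 B hd0 hd1 hdB heq
end

section
/- Let υ_j = 1/(υ'_j · ∏_{l≠j}(α_j−α_l)) for j ∈ {1,…,n}. Then for every i ≥ 0, the coefficient of x^i in the formal power series R̄(x)/Ḡ(x) equals Σ_{j=1}^n υ_j · r_j · α_j^i, where R̄(x) = x^{n−1}·R(1/x) and Ḡ(x) = ∏_{j=1}^n (1−α_j x). -/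
/-!
Partial fractions. Lagrange interpolation at the nodes `α_j` writes `R` as
`∑ⱼ R(α_j) wⱼ ∏_{l≠j} (X - α_l)` with `wⱼ = ∏_{l≠j} (α_j - α_l)⁻¹`; reflecting in
degree `n - 1` turns each `∏_{l≠j} (X - α_l)` into `∏_{l≠j} (1 - α_l X) = Ḡ / (1 - α_j X)`.
Hence `R̄ / Ḡ = ∑ⱼ R(α_j) wⱼ / (1 - α_j X)`, and `1 / (1 - a X)` is the geometric series
`∑ aⁱ Xⁱ`.
-/

open Polynomial Finset

theorem Polynomial.reflect_one_X_sub_C {R : Type*} [CommRing R] (a : R) :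
    reflect 1 (X - C a) = 1 - C a * X := by
  rw [reflect_sub, reflect_one_X, reflect_C, pow_one]

theorem Polynomial.reflect_finset_sum {R ι : Type*} [Semiring R] (s : Finset ι) (f : ι → R[X])
    (N : ℕ) : reflect N (∑ i ∈ s, f i) = ∑ i ∈ s, reflect N (f i) := by
  classical
  induction s using Finset.induction_on with
  | empty => simp [reflect_zero]
  | insert i s hi ih => rw [sum_insert hi, sum_insert hi, reflect_add, ih]

theorem Lagrange.reflect_nodal {R ι : Type*} [CommRing R] [Nontrivial R] (s : Finset ι)
    (v : ι → R) :
    reflect #s (nodal s v) = ∏ i ∈ s, (1 - C (v i) * X) := by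
  classical
  induction s using Finset.induction_on with
  | empty => simp [nodal_empty, reflect_one]
  | insert i s hi ih =>
    rw [nodal_insert_eq_nodal hi, card_insert_of_notMem hi, add_comm,
      reflect_mul _ _ (natDegree_X_sub_C_le _) natDegree_nodal.le, reflect_one_X_sub_C, ih,
      prod_insert hi]

theorem Lagrange.basis_eq_C_nodalWeight_mul_nodal_erase {F ι : Type*} [Field F] [DecidableEq ι]
    {s : Finset ι} {v : ι → F} {i : ι} (hi : i ∈ s) :
    Lagrange.basis s v i = C (nodalWeight s v i) * nodal (s.erase i) v := by
  rw [basis_eq_prod_sub_inv_mul_nodal_div hi, nodal_erase_eq_nodal_div hi]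

theorem Lagrange.reflect_eq_sum_mul_prod_erase {F ι : Type*} [Field F] [DecidableEq ι]
    {s : Finset ι} {v : ι → F} (hvs : Set.InjOn v s) {f : F[X]} (hf : f.degree < #s) :
    reflect (#s - 1) f = ∑ i ∈ s,
      C (f.eval (v i) * nodalWeight s v i) * ∏ j ∈ s.erase i, (1 - C (v j) * X) := by
  conv_lhs => rw [eq_interpolate hvs hf, interpolate_apply]
  rw [reflect_finset_sum]
  refine sum_congr rfl fun i hi => ?_
  rw [basis_eq_C_nodalWeight_mul_nodal_erase hi, ← mul_assoc, ← C_mul, reflect_C_mul,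
    ← card_erase_of_mem hi, reflect_nodal]

theorem PowerSeries.mk_pow_mul_one_sub_C_mul_X {R : Type*} [CommRing R] (a : R) :
    PowerSeries.mk (a ^ ·) * (1 - PowerSeries.C a * PowerSeries.X) = 1 := by
  simpa [PowerSeries.rescale_mk, PowerSeries.rescale_X] using
    congrArg (PowerSeries.rescale a) (PowerSeries.mk_one_mul_one_sub_eq_one (S := R))

namespace Polynomial

variable {F ι : Type*} [Field F] [DecidableEq ι] {s : Finset ι} (a : ι → F)

theorem coe_prod_erase_mul_inv_coe_prod {i : ι} (hi : i ∈ s) :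
    ((∏ j ∈ s.erase i, (1 - C (a j) * X) : F[X]) : PowerSeries F) *
        ((∏ j ∈ s, (1 - C (a j) * X) : F[X]) : PowerSeries F)⁻¹ =
      PowerSeries.mk (a i ^ ·) := by
  have hG : PowerSeries.constantCoeff
      ((∏ j ∈ s, (1 - C (a j) * X) : F[X]) : PowerSeries F) ≠ 0 := by
    simp [constantCoeff_coe, coeff_zero_eq_eval_zero, eval_prod]
  rw [eq_comm, PowerSeries.eq_mul_inv_iff_mul_eq hG, ← mul_prod_erase s _ hi, Polynomial.coe_mul,
    ← mul_assoc]
  simp [PowerSeries.mk_pow_mul_one_sub_C_mul_X]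

theorem coeff_coe_sum_mul_prod_erase_mul_inv_coe_prod (w : ι → F) (k : ℕ) :
    PowerSeries.coeff k
        (((∑ i ∈ s, C (w i) * ∏ j ∈ s.erase i, (1 - C (a j) * X) : F[X]) : PowerSeries F) *
          ((∏ j ∈ s, (1 - C (a j) * X) : F[X]) : PowerSeries F)⁻¹) =
      ∑ i ∈ s, w i * a i ^ k := by
  rw [← coeToPowerSeries.ringHom_apply, map_sum, sum_mul, map_sum]
  refine sum_congr rfl fun i hi => ?_
  rw [coeToPowerSeries.ringHom_apply, Polynomial.coe_mul, coe_C, mul_assoc,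
    coe_prod_erase_mul_inv_coe_prod a hi, PowerSeries.coeff_C_mul, PowerSeries.coeff_mk]

end Polynomial

theorem syndrome_coefficients_explicit_general
    (F : Type*) [Field F] (n : ℕ)
    (α υ' : Fin n → F) (hα : Function.Injective α)
    (r : Fin n → F)
    (R : F[X]) (hRdeg : R.degree < (n : ℕ))
    (hR : ∀ j, R.eval (α j) = r j / υ' j) :
    ∀ i : ℕ,
      PowerSeries.coeff i
          ((R.reflect (n - 1) : PowerSeries F) *
            ((∏ j, (1 - C (α j) * X) : F[X]) : PowerSeries F)⁻¹) =
        ∑ j, (1 / (υ' j * ∏ l ∈ Finset.univ.erase j, (α j - α l))) * r j * α j ^ i := by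
  intro i
  have hreflect := Lagrange.reflect_eq_sum_mul_prod_erase hα.injOn (s := univ) (f := R)
    (by rwa [card_univ, Fintype.card_fin])
  rw [card_univ, Fintype.card_fin] at hreflect
  rw [hreflect, coeff_coe_sum_mul_prod_erase_mul_inv_coe_prod]
  refine sum_congr rfl fun j _ => ?_
  rw [hR, Lagrange.nodalWeight, prod_inv_distrib]
  ring

/-- Explicit formula for the syndrome power series: the `i`-th coefficient of
`R̄(x)/Ḡ(x)` equals `Σ_j υ_j·r_j·α_j^i`, where
`υ_j = 1/(υ'_j·∏_{l≠j}(α_j−α_l))`, `R̄ = x^{n−1}·R(1/x)` and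
`Ḡ = ∏_j (1−α_j·x)`. -/
theorem syndrome_coefficients_explicit
    (F : Type*) [Field F] (n : ℕ)
    (α υ' : Fin n → F) (hα : Function.Injective α) (hα0 : ∀ i, α i ≠ 0)
    (hυ' : ∀ i, υ' i ≠ 0)
    (r : Fin n → F)
    (R : F[X]) (hRdeg : R.degree < (n : ℕ))
    (hR : ∀ j, R.eval (α j) = r j / υ' j) :
    ∀ i : ℕ,
      PowerSeries.coeff i
          ((R.reflect (n - 1) : PowerSeries F) *
            ((∏ j, (1 - C (α j) * X) : F[X]) : PowerSeries F)⁻¹) =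
        ∑ j, (1 / (υ' j * ∏ l ∈ Finset.univ.erase j, (α j - α l))) * r j * α j ^ i :=
  syndrome_coefficients_explicit_general F n α υ' hα r R hRdeg hR
end

section
/- Let ℓ ≥ 1 and τ be integers with N_t = n−τ−t(k−1) > 0 for t ∈ {0,…,ℓ}, and let Q(x,y) = Σ_{t=0}^{ℓ} Q^(t)(x)·y^t with deg Q^(t) < N_t for all t. Then Q(α_i, r_i/υ'_i) = 0 for all i ∈ {1,…,n} if and only if there exists a polynomial B ∈ F[x] with deg B < ℓ(n−k)−τ such that Q(x,R(x)) = B(x)·G(x). -/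
open Polynomial

/-- Roth–Ruckenstein univariate reformulation of the Sudan interpolation step:
`Q(αᵢ, rᵢ/υ'ᵢ) = 0` for all `i` holds iff there is `B` with
`deg B < ℓ(n−k)−τ` and `Q(x,R(x)) = B(x)·G(x)`. -/
theorem sudan_interpolation_univariate_reformulation
    (F : Type*) [Field F] (n k ℓ τ : ℕ) (hk : 1 ≤ k) (hkn : k ≤ n) (hℓ : 1 ≤ ℓ)
    (α υ' : Fin n → F) (hα : Function.Injective α) (hα0 : ∀ i, α i ≠ 0)
    (hυ' : ∀ i, υ' i ≠ 0)
    (r : Fin n → F)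
    (G : F[X]) (hG : G = ∏ i, (X - C (α i)))
    (R : F[X]) (hRdeg : R.degree < (n : ℕ))
    (hR : ∀ i, R.eval (α i) = r i / υ' i)
    (hN : ∀ t ≤ ℓ, 0 < n - τ - t * (k - 1))
    (Q : ℕ → F[X])
    (hQd : ∀ t ≤ ℓ, (Q t).degree < ((n - τ - t * (k - 1) : ℕ) : WithBot ℕ)) :
    (∀ i, ∑ t ∈ Finset.range (ℓ + 1), (Q t).eval (α i) * (r i / υ' i) ^ t = 0) ↔
      ∃ B : F[X], B.degree < ((ℓ * (n - k) - τ : ℕ) : WithBot ℕ) ∧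
        ∑ t ∈ Finset.range (ℓ + 1), Q t * R ^ t = B * G := by
  set S : F[X] := ∑ t ∈ Finset.range (ℓ + 1), Q t * R ^ t with hS
  have hn1 : 1 ≤ n := by have := hN 0 (by omega); omega
  have hSeval : ∀ i, S.eval (α i) =
      ∑ t ∈ Finset.range (ℓ + 1), (Q t).eval (α i) * (r i / υ' i) ^ t := by
    intro i
    simp [hS, eval_finset_sum, hR i]
  have hGmonic : G.Monic := by
    rw [hG]; exact monic_prod_of_monic _ _ fun i _ => monic_X_sub_C _
  have hGdeg : G.degree = (n : ℕ) := by
    rw [hG]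
    rw [degree_prod]
    simp [degree_X_sub_C]
  -- degree bound on S
  have hSdeg : S.degree < ((n + (ℓ * (n - k) - τ) : ℕ) : WithBot ℕ) := by
    rw [hS]
    refine lt_of_le_of_lt (degree_sum_le _ _) ?_
    rw [Finset.sup_lt_iff (by exact_mod_cast WithBot.bot_lt_coe _)]
    intro t ht
    rw [Finset.mem_range] at ht
    have htℓ : t ≤ ℓ := by omega
    by_cases h0 : Q t * R ^ t = 0
    · rw [h0, degree_zero]; exact WithBot.bot_lt_coe _
    have hQ0 : Q t ≠ 0 := fun h => h0 (by simp [h])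
    have hRd : R.natDegree ≤ n - 1 := by
      by_cases hR0 : R = 0
      · simp [hR0]
      · have := (natDegree_lt_iff_degree_lt hR0).mpr hRdeg
        omega
    have hQd' : (Q t).natDegree < n - τ - t * (k - 1) :=
      (natDegree_lt_iff_degree_lt hQ0).mpr (hQd t htℓ)
    have hprod : (Q t * R ^ t).natDegree ≤ (Q t).natDegree + t * R.natDegree := by
      refine le_trans (natDegree_mul_le) ?_
      have := natDegree_pow_le (p := R) (n := t)
      omega
    have key : (Q t).natDegree + t * R.natDegree < n + (ℓ * (n - k) - τ) := by
      have h1 : t * R.natDegree ≤ t * (n - 1) := Nat.mul_le_mul_left t hRd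
      have h2 : t * (n - 1) = t * (k - 1) + t * (n - k) := by
        rw [← Nat.mul_add]
        congr 1
        omega
      have h3 : t * (n - k) ≤ ℓ * (n - k) := Nat.mul_le_mul_right _ htℓ
      have h4 := hN t htℓ
      omega
    refine lt_of_le_of_lt (degree_le_natDegree) ?_
    exact_mod_cast lt_of_le_of_lt hprod key
  constructor
  · intro h
    have hdvd : G ∣ S := by
      rw [hG]
      refine Finset.prod_dvd_of_coprime
        ((Polynomial.pairwise_coprime_X_sub_C hα).set_pairwise _) fun i _ => ?_
      refine dvd_iff_isRoot.mpr ?_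
      rw [IsRoot.def, hSeval i, h i]
    obtain ⟨B, hB⟩ := hdvd
    refine ⟨B, ?_, by rw [hB]; ring⟩
    by_cases hB0 : B = 0
    · rw [hB0, degree_zero]; exact WithBot.bot_lt_coe _
    have hG0 : G ≠ 0 := hGmonic.ne_zero
    have : S.degree = G.degree + B.degree := by rw [hB, degree_mul]
    rw [this, hGdeg] at hSdeg
    rw [degree_eq_natDegree hB0] at hSdeg ⊢
    have : (n : ℕ) + B.natDegree < n + (ℓ * (n - k) - τ) := by exact_mod_cast hSdeg
    exact_mod_cast (by omega : B.natDegree < ℓ * (n - k) - τ)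
  · rintro ⟨B, hBdeg, hBeq⟩ i
    have hGz : G.eval (α i) = 0 := by
      rw [hG, eval_prod]
      exact Finset.prod_eq_zero (Finset.mem_univ i) (by simp)
    have := congrArg (Polynomial.eval (α i)) hBeq
    rw [hSeval i] at this
    rw [this, eval_mul, hGz, mul_zero]
end

section
/- Let υ_j = 1/(υ'_j·∏_{l≠j}(α_j−α_l)). For every t ∈ {0,…,ℓ} and i ≥ 0, the coefficient of the formal power series T^(t)(x) = R̄(x)^t/Ḡ(x) at index i+(t−1)(n−1) equals Σ_{j=1}^n υ_j · (r_j^t/υ'_j^{t−1}) · α_j^i = Σ_{j=1}^n υ_j·υ'_j·(r_j/υ'_j)^t·α_j^i, with the convention that coefficients at negative indices are zero (for t = 0 and i < n−1 the right–hand sum indeed vanishes). -/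
/-!
Reflecting the Lagrange identity `∑ⱼ ∏_{l ≠ j} (X - α_l) / (α_j - α_l) = 1` at degree `n - 1`
gives the partial fraction decomposition
`X^(n-1) / Ḡ = ∑ⱼ d_j⁻¹ / (1 - α_j X)` with `d_j = ∏_{l ≠ j} (α_j - α_l)`,
where `1 / (1 - a X)` is the geometric series `rescale a (mk 1)`.
For a polynomial `f` of degree at most `N`, the coefficient of `reflect N f / (1 - a X)` at
`N + i` is `f(a) a^i`. Since `R̄^t` is the reflection of `R^t` at `t (n - 1)`, multiplying
`R̄^t / Ḡ` by `X^(n-1)` turns the syndrome into `∑ⱼ d_j⁻¹ R(α_j)^t α_j^i`; the same shift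
shows that `∑ⱼ d_j⁻¹ α_j^i` vanishes for `i < n - 1`.
-/

open Polynomial

namespace Polynomial

theorem reflect_sum {R ι : Type*} [Semiring R] (s : Finset ι) (f : ι → R[X]) (N : ℕ) :
    reflect N (∑ i ∈ s, f i) = ∑ i ∈ s, reflect N (f i) :=
  map_sum (⟨⟨reflect N, reflect_zero⟩, fun f g => reflect_add f g N⟩ : R[X] →+ R[X]) f s

theorem reflect_pow {R : Type*} [CommSemiring R] {f : R[X]} {N : ℕ}
    (hf : f.natDegree ≤ N) (t : ℕ) : reflect (t * N) (f ^ t) = reflect N f ^ t := by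
  induction t with
  | zero => simp
  | succ t ih =>
    rw [pow_succ, pow_succ, add_one_mul,
      reflect_mul _ _ (natDegree_pow_le_of_le t hf) hf, ih]

theorem reflect_nodal {R ι : Type*} [CommRing R] [Nontrivial R] [DecidableEq ι]
    (s : Finset ι) (a : ι → R) :
    reflect s.card (Lagrange.nodal s a) = ∏ l ∈ s, (1 - C (a l) * X) := by
  induction s using Finset.induction with
  | empty => simp [Lagrange.nodal_empty]
  | insert i s hi ih =>
    rw [Lagrange.nodal_insert_eq_nodal hi, Finset.card_insert_of_notMem hi, add_comm,
      reflect_mul _ _ (natDegree_X_sub_C_le _) Lagrange.natDegree_nodal.le, ih,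
      Finset.prod_insert hi, reflect_sub, reflect_one_X, reflect_C, pow_one]

theorem coe_one_sub_C_mul_X_mul_rescale_mk_one {R : Type*} [CommRing R] (a : R) :
    ((1 - C a * X : R[X]) : PowerSeries R) * PowerSeries.rescale a (PowerSeries.mk 1) = 1 := by
  have h := congrArg (PowerSeries.rescale a) (PowerSeries.mk_one_mul_one_sub_eq_one R)
  rw [map_mul, map_sub, map_one, PowerSeries.rescale_X] at h
  rw [mul_comm, ← h]
  push_cast
  rfl

theorem coeff_coe_reflect_mul_rescale_mk_one {R : Type*} [CommRing R] {f : R[X]} {N : ℕ}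
    (hf : f.natDegree ≤ N) (a : R) (i : ℕ) :
    PowerSeries.coeff (i + N)
      ((reflect N f : PowerSeries R) * PowerSeries.rescale a (PowerSeries.mk 1)) =
      f.eval a * a ^ i := by
  have hlt : f.natDegree < N + 1 := Nat.lt_succ_of_le hf
  conv_lhs => rw [f.as_sum_range_C_mul_X_pow' hlt]
  rw [eval_eq_sum_range' hlt, reflect_sum, ← coeToPowerSeries.ringHom_apply,
    map_sum coeToPowerSeries.ringHom, Finset.sum_mul, map_sum, Finset.sum_mul]
  refine Finset.sum_congr rfl fun e he => ?_
  have he : e ≤ N := Nat.lt_succ_iff.1 (Finset.mem_range.1 he)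
  rw [reflect_C_mul_X_pow, revAt_le he, coeToPowerSeries.ringHom_apply, coe_mul, coe_pow,
    coe_C, coe_X, mul_comm (PowerSeries.C _), mul_assoc, PowerSeries.coeff_X_pow_mul',
    if_pos (by omega), PowerSeries.coeff_C_mul, PowerSeries.coeff_rescale,
    PowerSeries.coeff_mk, Pi.one_apply, mul_one, mul_assoc, ← pow_add]
  congr 2
  omega

end Polynomial

section Lagrange

variable {F ι : Type*} [Field F] [Fintype ι] [DecidableEq ι]

theorem X_pow_card_sub_one_eq_sum_prod_one_sub [Nonempty ι] {α : ι → F}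
    (hα : Function.Injective α) :
    (X ^ (Fintype.card ι - 1) : F[X]) = ∑ j, C (∏ l ∈ Finset.univ.erase j, (α j - α l))⁻¹ *
      ∏ l ∈ Finset.univ.erase j, (1 - C (α l) * X) := by
  have h := congrArg (reflect (Fintype.card ι - 1))
    (Lagrange.sum_basis hα.injOn Finset.univ_nonempty)
  rw [reflect_one, reflect_sum] at h
  rw [← h]
  refine Finset.sum_congr rfl fun j _ => ?_
  rw [Lagrange.basis_eq_prod_sub_inv_mul_nodal_div (Finset.mem_univ j),
    ← Lagrange.nodal_erase_eq_nodal_div (Finset.mem_univ j), reflect_C_mul,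
    Lagrange.nodalWeight, Finset.prod_inv_distrib, ← Finset.card_univ,
    ← Finset.card_erase_of_mem (Finset.mem_univ j), reflect_nodal]

theorem X_pow_mul_inv_prod_one_sub_C_mul_X [Nonempty ι] {α : ι → F}
    (hα : Function.Injective α) :
    (PowerSeries.X ^ (Fintype.card ι - 1) : PowerSeries F) *
        ((∏ j, (1 - C (α j) * X) : F[X]) : PowerSeries F)⁻¹ =
      ∑ j, PowerSeries.C (∏ l ∈ Finset.univ.erase j, (α j - α l))⁻¹ *
        PowerSeries.rescale (α j) (PowerSeries.mk 1) := by
  have hG : PowerSeries.constantCoeff ((∏ j, (1 - C (α j) * X) : F[X]) : PowerSeries F) ≠ 0 := by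
    simp [constantCoeff_coe, coeff_zero_eq_eval_zero, eval_prod]
  refine ((PowerSeries.eq_mul_inv_iff_mul_eq hG).2 ?_).symm
  have hX := congrArg coeToPowerSeries.ringHom (X_pow_card_sub_one_eq_sum_prod_one_sub hα)
  simp only [map_sum, map_mul, map_pow, coeToPowerSeries.ringHom_apply, coe_X, coe_C] at hX
  rw [hX, Finset.sum_mul]
  refine Finset.sum_congr rfl fun j _ => ?_
  rw [← Finset.mul_prod_erase Finset.univ _ (Finset.mem_univ j), coe_mul]
  linear_combination (PowerSeries.C (∏ l ∈ Finset.univ.erase j, (α j - α l))⁻¹ *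
    ((∏ l ∈ Finset.univ.erase j, (1 - C (α l) * X) : F[X]) : PowerSeries F)) *
      coe_one_sub_C_mul_X_mul_rescale_mk_one (α j)

theorem coeff_coe_reflect_mul_inv_prod_one_sub_C_mul_X [Nonempty ι] {α : ι → F}
    (hα : Function.Injective α) {f : F[X]} {N : ℕ} (hf : f.natDegree ≤ N) (i : ℕ)
    (hi : Fintype.card ι - 1 ≤ i + N) :
    PowerSeries.coeff (i + N - (Fintype.card ι - 1))
        ((reflect N f : PowerSeries F) * ((∏ j, (1 - C (α j) * X) : F[X]) : PowerSeries F)⁻¹) =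
      ∑ j, (∏ l ∈ Finset.univ.erase j, (α j - α l))⁻¹ * f.eval (α j) * α j ^ i := by
  have hshift := PowerSeries.coeff_X_pow_mul'
    ((reflect N f : PowerSeries F) * ((∏ j, (1 - C (α j) * X) : F[X]) : PowerSeries F)⁻¹)
    (Fintype.card ι - 1) (i + N)
  rw [if_pos hi] at hshift
  rw [← hshift, mul_left_comm,
    X_pow_mul_inv_prod_one_sub_C_mul_X hα, Finset.mul_sum, map_sum]
  refine Finset.sum_congr rfl fun j _ => ?_
  rw [mul_left_comm, PowerSeries.coeff_C_mul, coeff_coe_reflect_mul_rescale_mk_one hf, mul_assoc]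

theorem sum_inv_prod_sub_mul_pow_eq_zero {α : ι → F} (hα : Function.Injective α) {i : ℕ}
    (hi : i < Fintype.card ι - 1) :
    ∑ j, (∏ l ∈ Finset.univ.erase j, (α j - α l))⁻¹ * α j ^ i = 0 := by
  have : Nonempty ι := Fintype.card_pos_iff.1 (by omega)
  have h := congrArg (PowerSeries.coeff i) (X_pow_mul_inv_prod_one_sub_C_mul_X hα)
  rw [PowerSeries.coeff_X_pow_mul', if_neg (by omega), map_sum] at h
  simpa [PowerSeries.coeff_C_mul, PowerSeries.coeff_rescale] using h.symm

end Lagrange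

theorem sudan_syndromes_explicit_general
    (F : Type*) [Field F] (n ℓ : ℕ) (hn : 1 ≤ n)
    (α υ' : Fin n → F) (hα : Function.Injective α)
    (hυ' : ∀ i, υ' i ≠ 0)
    (r : Fin n → F)
    (R : F[X]) (hRdeg : R.degree < (n : ℕ))
    (hR : ∀ j, R.eval (α j) = r j / υ' j) :
    (∀ t ≤ ℓ, ∀ i : ℕ, n - 1 ≤ i + t * (n - 1) →
        PowerSeries.coeff (R := F) (i + t * (n - 1) - (n - 1))
            ((R.reflect (n - 1) : PowerSeries F) ^ t *
              ((∏ j, (1 - C (α j) * X) : F[X]) : PowerSeries F)⁻¹) =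
          ∑ j, (1 / (υ' j * ∏ l ∈ Finset.univ.erase j, (α j - α l))) * υ' j *
            (r j / υ' j) ^ t * α j ^ i) ∧
      (∀ i : ℕ, i < n - 1 →
        ∑ j, (1 / (υ' j * ∏ l ∈ Finset.univ.erase j, (α j - α l))) * υ' j *
          (r j / υ' j) ^ (0 : ℕ) * α j ^ i = 0) := by
  have : Nonempty (Fin n) := ⟨⟨0, hn⟩⟩
  have hυ'_cancel : ∀ j, 1 / (υ' j * ∏ l ∈ Finset.univ.erase j, (α j - α l)) * υ' j =
      (∏ l ∈ Finset.univ.erase j, (α j - α l))⁻¹ := fun j => by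
    rw [one_div, mul_inv, mul_right_comm, inv_mul_cancel₀ (hυ' j), one_mul]
  have hRnat : R.natDegree ≤ n - 1 := by
    rcases eq_or_ne R 0 with rfl | hR0
    · simp
    · have := (natDegree_lt_iff_degree_lt hR0).2 hRdeg
      omega
  refine ⟨fun t _ i hi => ?_, fun i hi => ?_⟩
  · have h := coeff_coe_reflect_mul_inv_prod_one_sub_C_mul_X hα
      (natDegree_pow_le_of_le t hRnat) i (by simpa using hi)
    rw [reflect_pow hRnat, coe_pow, Fintype.card_fin] at h
    rw [h]
    refine Finset.sum_congr rfl fun j _ => ?_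
    rw [eval_pow, hR, hυ'_cancel]
  · rw [← sum_inv_prod_sub_mul_pow_eq_zero hα (by simpa using hi)]
    refine Finset.sum_congr rfl fun j _ => ?_
    rw [hυ'_cancel, pow_zero, mul_one]

/-- Explicit formula for the generalized syndromes of the reformulated Sudan
interpolation problem: the coefficient of the power series
`T^(t)(x) = R̄(x)^t/Ḡ(x)` at index `i+(t−1)(n−1)` equals
`Σ_j υ_j·υ'_j·(r_j/υ'_j)^t·α_j^i`, where `υ_j = 1/(υ'_j·∏_{l≠j}(α_j−α_l))`;
coefficients at negative indices are zero, and correspondingly for `t = 0` and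
`i < n−1` the right-hand sum vanishes. -/
theorem sudan_syndromes_explicit
    (F : Type*) [Field F] (n ℓ : ℕ) (hn : 1 ≤ n)
    (α υ' : Fin n → F) (hα : Function.Injective α) (hα0 : ∀ i, α i ≠ 0)
    (hυ' : ∀ i, υ' i ≠ 0)
    (r : Fin n → F)
    (R : F[X]) (hRdeg : R.degree < (n : ℕ))
    (hR : ∀ j, R.eval (α j) = r j / υ' j) :
    (∀ t ≤ ℓ, ∀ i : ℕ, n - 1 ≤ i + t * (n - 1) →
        PowerSeries.coeff (R := F) (i + t * (n - 1) - (n - 1))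
            ((R.reflect (n - 1) : PowerSeries F) ^ t *
              ((∏ j, (1 - C (α j) * X) : F[X]) : PowerSeries F)⁻¹) =
          ∑ j, (1 / (υ' j * ∏ l ∈ Finset.univ.erase j, (α j - α l))) * υ' j *
            (r j / υ' j) ^ t * α j ^ i) ∧
      (∀ i : ℕ, i < n - 1 →
        ∑ j, (1 / (υ' j * ∏ l ∈ Finset.univ.erase j, (α j - α l))) * υ' j *
          (r j / υ' j) ^ (0 : ℕ) * α j ^ i = 0) :=
  sudan_syndromes_explicit_general F n ℓ hn α υ' hα hυ' r R hRdeg hR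
end

section
/- Let υ_j = 1/(υ'_j·∏_{l≠j}(α_j−α_l)) and for t ∈ {0,…,ℓ} and m ≥ 0 define the syndromes S^(t)_m = Σ_{p=1}^n υ_p·υ'_p·(r_p/υ'_p)^t·α_p^m. Let N_t = n−τ−t(k−1) > 0 and let Q(x,y) = Σ_{t=0}^{ℓ} Σ_{i=0}^{N_t−1} Q^(t)_i x^i y^t. Then Q(α_p, r_p/υ'_p) = 0 for all p ∈ {1,…,n} if and only if Σ_{t=0}^{ℓ} Σ_{i=0}^{N_t−1} Q^(t)_i · S^(t)_{i+j} = 0 for all j ∈ {0,…,n−1}. -/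
open Polynomial

/-- The Sudan interpolation conditions are equivalent to the homogeneous linear
system given by a horizontal band of `ℓ+1` Hankel matrices built from the
syndromes `S^(t)_m = Σ_p υ_p·υ'_p·(r_p/υ'_p)^t·α_p^m`:
`Q(α_p, r_p/υ'_p) = 0` for all `p` iff
`Σ_t Σ_{i<N_t} Q^(t)_i·S^(t)_{i+j} = 0` for all `j ∈ {0,…,n−1}`. -/
theorem sudan_interpolation_iff_syndrome_system
    (F : Type*) [Field F] (n k ℓ τ : ℕ) (hk : 1 ≤ k) (hkn : k ≤ n)
    (α υ' : Fin n → F) (hα : Function.Injective α) (hα0 : ∀ i, α i ≠ 0)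
    (hυ' : ∀ i, υ' i ≠ 0)
    (r : Fin n → F)
    (hN : ∀ t ≤ ℓ, 0 < n - τ - t * (k - 1))
    (Q : ℕ → ℕ → F) :
    (∀ p : Fin n,
        ∑ t ∈ Finset.range (ℓ + 1),
          (∑ i ∈ Finset.range (n - τ - t * (k - 1)), Q t i * α p ^ i) *
            (r p / υ' p) ^ t = 0) ↔
      (∀ j < n,
        ∑ t ∈ Finset.range (ℓ + 1),
          ∑ i ∈ Finset.range (n - τ - t * (k - 1)),
            Q t i *
              (∑ p, (1 / (υ' p * ∏ l ∈ Finset.univ.erase p, (α p - α l))) * υ' p *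
                (r p / υ' p) ^ t * α p ^ (i + j)) = 0) := by
  set w : Fin n → F := fun p =>
    (1 / (υ' p * ∏ l ∈ Finset.univ.erase p, (α p - α l))) * υ' p with hw
  set L : Fin n → F := fun p =>
    ∑ t ∈ Finset.range (ℓ + 1),
      (∑ i ∈ Finset.range (n - τ - t * (k - 1)), Q t i * α p ^ i) *
        (r p / υ' p) ^ t with hL
  have hwne : ∀ p, w p ≠ 0 := by
    intro p
    have hP : (∏ l ∈ Finset.univ.erase p, (α p - α l)) ≠ 0 := by
      apply Finset.prod_ne_zero_iff.2
      intro l hl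
      have : l ≠ p := Finset.ne_of_mem_erase hl
      exact sub_ne_zero.2 fun h => this (hα h.symm)
    simp only [hw, one_div, mul_inv_rev]
    exact mul_ne_zero (mul_ne_zero (inv_ne_zero hP) (inv_ne_zero (hυ' p))) (hυ' p)
  have key : ∀ j : ℕ,
      (∑ t ∈ Finset.range (ℓ + 1),
        ∑ i ∈ Finset.range (n - τ - t * (k - 1)),
          Q t i *
            (∑ p, (1 / (υ' p * ∏ l ∈ Finset.univ.erase p, (α p - α l))) * υ' p *
              (r p / υ' p) ^ t * α p ^ (i + j))) =
      ∑ p, (w p * L p) * α p ^ j := by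
    intro j
    simp only [Finset.mul_sum]
    rw [show (∑ t ∈ Finset.range (ℓ + 1),
        ∑ i ∈ Finset.range (n - τ - t * (k - 1)),
          ∑ p : Fin n, Q t i *
            ((1 / (υ' p * ∏ l ∈ Finset.univ.erase p, (α p - α l))) * υ' p *
              (r p / υ' p) ^ t * α p ^ (i + j))) =
      ∑ p : Fin n, ∑ t ∈ Finset.range (ℓ + 1),
        ∑ i ∈ Finset.range (n - τ - t * (k - 1)),
          Q t i * (w p * (r p / υ' p) ^ t * α p ^ (i + j)) from ?_]
    · apply Finset.sum_congr rfl
      intro p _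
      simp only [hL, Finset.sum_mul, Finset.mul_sum]
      apply Finset.sum_congr rfl
      intro t _
      apply Finset.sum_congr rfl
      intro i _
      rw [pow_add]
      ring
    · rw [← Finset.sum_comm]
      apply Finset.sum_congr rfl
      intro t _
      rw [Finset.sum_comm]
  constructor
  · intro h j hj
    rw [key j]
    apply Finset.sum_eq_zero
    intro p _
    rw [show L p = 0 from h p]
    ring
  · intro h p
    have hz : ∀ j : Fin n, ∑ q, (w q * L q) * α q ^ (j : ℕ) = 0 := by
      intro j
      rw [← key j]
      exact h j j.isLt
    have := Matrix.eq_zero_of_forall_pow_sum_mul_pow_eq_zero hα hz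
    have hzp : w p * L p = 0 := congrFun this p
    exact (mul_eq_zero.1 hzp).resolve_left (hwne p)
end

section
/- Let (α, r) ∈ F², let R ∈ F[x] be any polynomial with R(α) = r, let s ≥ 1 and let Q(x,y) ∈ F[x,y]. Then Q has multiplicity at least s at (α, r) — i.e., every coefficient of Q(x+α, y+r) of total degree less than s vanishes — if and only if (x−α)^{s−b} divides Q^{[b]}(x, R(x)) in F[x] for every b ∈ {0,…,s−1}, where Q^{[b]} denotes the b-th Hasse derivative of Q with respect to the variable y. -/
open Polynomial

private lemma eval_eq_sum_hasse {S : Type*} [CommRing S] (a b : S) (f : S[X]) :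
    f.eval b = (taylor a f).sum fun i c => c * (b - a) ^ i := by
  conv_lhs => rw [← sum_taylor_eq f a]
  rw [Polynomial.sum_def, Polynomial.sum_def, eval_finset_sum]
  simp

private lemma key_transfer {S : Type*} [CommRing S] (t a b : S) (ht : t ∣ b - a)
    (s : ℕ) (f : S[X])
    (h : ∀ k < s, t ^ (s - k) ∣ (hasseDeriv k f).eval a) :
    ∀ k < s, t ^ (s - k) ∣ (hasseDeriv k f).eval b := by
  intro k hk
  rw [eval_eq_sum_hasse a b, Polynomial.sum_def]
  apply Finset.dvd_sum
  intro i _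
  rw [taylor_coeff]
  have hcomp : hasseDeriv i (hasseDeriv k f) = (i + k).choose i • hasseDeriv (i + k) f :=
    LinearMap.congr_fun (hasseDeriv_comp i k) f
  rw [hcomp]
  by_cases hik : i + k < s
  · have h1 : t ^ (s - (i + k)) ∣ ((i + k).choose i • hasseDeriv (i + k) f).eval a := by
      rw [eval_smul, nsmul_eq_mul]
      exact Dvd.dvd.mul_left (h (i + k) hik) _
    have h2 : t ^ i ∣ (b - a) ^ i := pow_dvd_pow_of_dvd ht i
    have : t ^ (s - (i + k)) * t ^ i ∣ _ := mul_dvd_mul h1 h2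
    rwa [← pow_add, show s - (i + k) + i = s - k by omega] at this
  · have h2 : t ^ (s - k) ∣ (b - a) ^ i :=
      dvd_trans (pow_dvd_pow t (by omega)) (pow_dvd_pow_of_dvd ht i)
    exact Dvd.dvd.mul_left h2 _

private lemma shift_dvd_iff {F : Type*} [CommRing F] (α : F) (k : ℕ) (P : F[X]) :
    X ^ k ∣ aeval (X + C α : F[X]) P ↔ (X - C α) ^ k ∣ P := by
  have hinv : ∀ Q : F[X], aeval (X - C α : F[X]) (aeval (X + C α : F[X]) Q) = Q := by
    intro Q
    have := aeval_algHom_apply (aeval (X - C α : F[X])) (X + C α : F[X]) Q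
    simp only [map_add, aeval_X, aeval_C, sub_add_cancel, aeval_X_left_apply, algebraMap_eq] at this
    exact this.symm
  constructor
  · intro hd
    have := map_dvd (aeval (X - C α : F[X])) hd
    rwa [map_pow, aeval_X, hinv] at this
  · intro hd
    have := map_dvd (aeval (X + C α : F[X])) hd
    rwa [map_pow, map_sub, aeval_X, aeval_C, algebraMap_eq, add_sub_cancel_right] at this

/-- A bivariate polynomial `Q(x,y)` (encoded as an element of `F[x][y]`) has
multiplicity at least `s` at `(α, r)` — i.e. every coefficient of
`Q(x+α, y+r)` of total degree less than `s` vanishes — iff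
`(x−α)^{s−b}` divides `Q^{[b]}(x, R(x))` for every `b ∈ {0,…,s−1}`, where
`Q^{[b]}` is the `b`-th Hasse derivative of `Q` with respect to `y` and `R` is
any polynomial with `R(α) = r`. -/
theorem multiplicity_iff_hasse_derivative_divisibility
    (F : Type*) [Field F] (α r : F) (R : F[X]) (hR : R.eval α = r)
    (s : ℕ) (hs : 1 ≤ s) (Q : Polynomial (Polynomial F)) :
    (∀ i j : ℕ, i + j < s →
        ((((Q.comp (X + C (C r))).map
            ((aeval (X + C α : F[X])).toRingHom)).coeff j).coeff i = 0)) ↔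
      (∀ b < s, (X - C α) ^ (s - b) ∣ (Q.hasseDeriv b).eval R) := by
  have hco : ∀ j : ℕ, ((Q.comp (X + C (C r))).map
      ((aeval (X + C α : F[X])).toRingHom)).coeff j
      = aeval (X + C α : F[X]) ((hasseDeriv j Q).eval (C r)) := by
    intro j
    rw [coeff_map, ← taylor_apply, taylor_coeff]
    rfl
  have hdvd : (X - C α : F[X]) ∣ R - C r := by
    rw [dvd_iff_isRoot]
    simp [IsRoot, hR]
  have hA : (∀ i j : ℕ, i + j < s →
        ((((Q.comp (X + C (C r))).map
            ((aeval (X + C α : F[X])).toRingHom)).coeff j).coeff i = 0)) ↔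
      ∀ b < s, (X - C α) ^ (s - b) ∣ (hasseDeriv b Q).eval (C r) := by
    constructor
    · intro h b hb
      rw [← shift_dvd_iff, X_pow_dvd_iff]
      intro i hi
      have := h i b (by omega)
      rwa [hco] at this
    · intro h i j hij
      rw [hco]
      have hj : j < s := by omega
      have := (shift_dvd_iff α (s - j) ((hasseDeriv j Q).eval (C r))).2 (h j hj)
      exact X_pow_dvd_iff.1 this i (by omega)
  rw [hA]
  constructor
  · intro h
    exact key_transfer (X - C α) (C r) R hdvd s Q h
  · intro h
    exact key_transfer (X - C α) R (C r) (dvd_sub_comm.mp hdvd) s Q h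
end

section
/- Let s ≥ 1, ℓ ≥ s−1 and τ be such that N_t = s(n−τ)−t(k−1) > 0 for t ∈ {0,…,ℓ}, and let Q(x,y) = Σ_{t=0}^{ℓ} Q^(t)(x)·y^t with deg Q^(t) < N_t for all t (equivalently wdeg_{1,k−1} Q < s(n−τ)). Then Q has multiplicity at least s at (α_i, r_i/υ'_i) for every i ∈ {1,…,n} if and only if there exist polynomials B^(0),…,B^(s−1) ∈ F[x] with deg B^(b) < ℓ(n−k)−sτ+b such that Q^{[b]}(x, R(x)) = B^(b)(x)·G(x)^{s−b} for every b ∈ {0,…,s−1}. -/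
/-!
The `(i, j)` coefficient of `Q(x + α, y + β)` is the `i`-th Hasse derivative at `α` of
`Q^{[j]}(x, β)`, so multiplicity `s` at `(α, β)` says `(x - α)^{s-j} ∣ Q^{[j]}(x, β)` for all
`j < s`. Taylor-expanding `Q^{[b]}` in `y` between `β` and `R(x)`, whose difference is divisible
by `x - α` when `R(α) = β`, shows that this family of divisibilities is equivalent to the same
family with `β` replaced by `R(x)`. As the `x - α_i` are pairwise coprime, the conditions at all
`n` points amount to `G^{s-b} ∣ Q^{[b]}(x, R(x))` for `b < s`, and the weighted-degree bound on `Q`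
gives `deg Q^{[b]}(x, R(x)) < ℓ(n - k) + b - sτ + (s - b)n`, which is the bound on the cofactor.
-/

open Polynomial

namespace Polynomial

variable {S : Type*} [CommRing S]

theorem eval_hasseDeriv_eq_sum_range (f : S[X]) (b : ℕ) (c e : S) :
    (f.hasseDeriv b).eval c =
      ∑ m ∈ Finset.range ((f.hasseDeriv b).natDegree + 1),
        ((m + b).choose m : S) * (f.hasseDeriv (m + b)).eval e * (c - e) ^ m := by
  have htaylor : (f.hasseDeriv b).eval c = (taylor e (f.hasseDeriv b)).eval (c - e) := by
    rw [taylor_eval, sub_add_cancel]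
  rw [htaylor, eval_eq_sum_range, natDegree_taylor]
  refine Finset.sum_congr rfl fun m _ => ?_
  rw [taylor_coeff, ← LinearMap.comp_apply, hasseDeriv_comp, LinearMap.smul_apply, eval_smul,
    nsmul_eq_mul]

theorem pow_sub_dvd_eval_hasseDeriv_of_dvd_sub {f : S[X]} {s : ℕ} {π c e : S} (hce : π ∣ c - e)
    (he : ∀ j < s, π ^ (s - j) ∣ (f.hasseDeriv j).eval e) {b : ℕ} (hb : b < s) :
    π ^ (s - b) ∣ (f.hasseDeriv b).eval c := by
  rw [eval_hasseDeriv_eq_sum_range f b c e]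
  refine Finset.dvd_sum fun m _ => ?_
  rw [mul_assoc]
  refine dvd_mul_of_dvd_right ?_ _
  have hpow : π ^ m ∣ (c - e) ^ m := pow_dvd_pow_of_dvd hce m
  rcases lt_or_ge (m + b) s with hmb | hmb
  · rw [show s - b = s - (m + b) + m by omega, pow_add]
    exact mul_dvd_mul (he _ hmb) hpow
  · exact dvd_mul_of_dvd_right ((pow_dvd_pow π (by omega)).trans hpow) _

theorem forall_pow_sub_dvd_eval_hasseDeriv_iff_of_dvd_sub {f : S[X]} {s : ℕ} {π c e : S}
    (hce : π ∣ c - e) :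
    (∀ j < s, π ^ (s - j) ∣ (f.hasseDeriv j).eval c) ↔
      ∀ j < s, π ^ (s - j) ∣ (f.hasseDeriv j).eval e :=
  ⟨fun hc _ => pow_sub_dvd_eval_hasseDeriv_of_dvd_sub (dvd_sub_comm.mp hce) hc,
    fun he _ => pow_sub_dvd_eval_hasseDeriv_of_dvd_sub hce he⟩

theorem coeff_map_comp_X_add_C (Q : S[X][X]) (a : S) (β : S[X]) (j : ℕ) :
    ((Q.comp (X + C β)).map (aeval (X + C a : S[X])).toRingHom).coeff j =
      ((Q.hasseDeriv j).eval β).comp (X + C a) := by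
  rw [coeff_map, ← taylor_apply, taylor_coeff, comp_eq_aeval]
  rfl

theorem forall_coeff_map_comp_X_add_C_eq_zero_iff (Q : S[X][X]) (a : S) (β : S[X]) (s : ℕ) :
    (∀ i j : ℕ, i + j < s →
        (((Q.comp (X + C β)).map (aeval (X + C a : S[X])).toRingHom).coeff j).coeff i = 0) ↔
      ∀ j < s, (X - C a) ^ (s - j) ∣ (Q.hasseDeriv j).eval β := by
  simp_rw [coeff_map_comp_X_add_C, X_sub_C_pow_dvd_iff, X_pow_dvd_iff]
  exact ⟨fun h j _ i hi => h i j (by omega), fun h i j hij => h j (by omega) i (by omega)⟩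

theorem natDegree_coeff_hasseDeriv_le (f : S[X][X]) (b m : ℕ) :
    ((f.hasseDeriv b).coeff m).natDegree ≤ (f.coeff (m + b)).natDegree := by
  rw [hasseDeriv_coeff, ← C_eq_natCast]
  exact natDegree_C_mul_le _ _

theorem add_mem_support_of_mem_support_hasseDeriv {f : S[X]} {b m : ℕ}
    (h : m ∈ (f.hasseDeriv b).support) : m + b ∈ f.support := by
  rw [mem_support_iff, hasseDeriv_coeff] at h
  exact mem_support_iff.mpr (right_ne_zero_of_mul h)

theorem degree_eval_lt_of_forall_mem_support {P : S[X][X]} {q : S[X]} {D : ℕ}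
    (h : ∀ t ∈ P.support, (P.coeff t).natDegree + t * q.natDegree < D) :
    (P.eval q).degree < D := by
  rw [eval_eq_sum, sum_def]
  refine (degree_sum_le _ _).trans_lt <|
    (Finset.sup_lt_iff (WithBot.bot_lt_coe D)).mpr fun t ht => degree_le_natDegree.trans_lt ?_
  exact WithBot.coe_lt_coe.mpr
    ((natDegree_mul_le.trans (Nat.add_le_add_left natDegree_pow_le _)).trans_lt (h t ht))

theorem prod_X_sub_C_pow_dvd_iff {K ι : Type*} [Field K] [Fintype ι] {α : ι → K}
    (hα : Function.Injective α) (m : ℕ) (p : K[X]) :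
    (∏ i, (X - C (α i))) ^ m ∣ p ↔ ∀ i, (X - C (α i)) ^ m ∣ p := by
  rw [← Finset.prod_pow]
  refine ⟨fun h i =>
      (Finset.dvd_prod_of_mem (fun i => (X - C (α i)) ^ m) (Finset.mem_univ i)).trans h,
    fun h => Finset.prod_dvd_of_coprime ?_ fun i _ => h i⟩
  exact ((pairwise_coprime_X_sub_C hα).mono fun _ _ hij => hij.pow).set_pairwise _

section Nontrivial

variable [Nontrivial S]

theorem Monic.degree_lt_of_degree_mul_lt {p g : S[X]} (hg : g.Monic) {d : ℕ}
    (h : (p * g).degree < (d + g.natDegree : ℕ)) : p.degree < d := by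
  rw [hg.degree_mul, degree_eq_natDegree hg.ne_zero, Nat.cast_add] at h
  exact lt_of_add_lt_add_right h

theorem forall_pow_dvd_iff_exists_eq_mul_pow {g : S[X]} (hg : g.Monic) {s : ℕ} {e D : ℕ → ℕ}
    {A : ℕ → S[X]}
    (hA : ∀ b < s, (A b).degree < ((D b + e b * g.natDegree : ℕ) : WithBot ℕ)) :
    (∀ b < s, g ^ e b ∣ A b) ↔
      ∃ B : ℕ → S[X], ∀ b < s, (B b).degree < (D b : WithBot ℕ) ∧ A b = B b * g ^ e b := by
  constructor
  · refine fun hdvd => ⟨fun b => A b /ₘ g ^ e b, fun b hb => ?_⟩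
    obtain ⟨B, hB⟩ := hdvd b hb
    have hdeg := hA b hb
    rw [hB, mul_comm, ← hg.natDegree_pow] at hdeg
    dsimp only
    rw [hB, mul_divByMonic_cancel_left B (hg.pow _)]
    exact ⟨(hg.pow _).degree_lt_of_degree_mul_lt hdeg, mul_comm _ _⟩
  · rintro ⟨B, hB⟩ b hb
    rw [(hB b hb).2]
    exact dvd_mul_left _ _

end Nontrivial

end Polynomial

namespace GuruswamiSudan

theorem degree_eval_hasseDeriv_lt {F : Type*} [CommRing F] {n k s ℓ τ : ℕ} (hk : 1 ≤ k)
    (hkn : k ≤ n) {R : F[X]} (hRdeg : R.degree < n)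
    (hN : ∀ t ≤ ℓ, 0 < s * (n - τ) - t * (k - 1)) {Q : F[X][X]} (hQℓ : Q.degree ≤ ℓ)
    (hQd : ∀ t ≤ ℓ, (Q.coeff t).degree < ((s * (n - τ) - t * (k - 1) : ℕ) : WithBot ℕ))
    {b : ℕ} (hb : b < s) :
    ((Q.hasseDeriv b).eval R).degree <
      ((ℓ * (n - k) + b - s * τ + (s - b) * n : ℕ) : WithBot ℕ) := by
  have hd : R.natDegree ≤ n - 1 := by
    rcases eq_or_ne R 0 with rfl | hR0
    · simp
    · exact Nat.le_sub_one_of_lt ((natDegree_lt_iff_degree_lt hR0).mpr hRdeg)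
  refine degree_eval_lt_of_forall_mem_support fun m hm => ?_
  have hsupp := add_mem_support_of_mem_support_hasseDeriv hm
  have ht : m + b ≤ ℓ :=
    (le_natDegree_of_mem_supp _ hsupp).trans (natDegree_le_iff_degree_le.mpr hQℓ)
  have hc : (Q.coeff (m + b)).natDegree < s * (n - τ) - (m + b) * (k - 1) :=
    (natDegree_lt_iff_degree_lt (mem_support_iff.mp hsupp)).mpr (hQd _ ht)
  have hτ : τ ≤ n := by
    by_contra h
    simpa [Nat.sub_eq_zero_of_le (not_le.mp h).le] using hN 0 (Nat.zero_le ℓ)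
  have hc' : (Q.coeff (m + b)).natDegree + (m + b) * (k - 1) < s * (n - τ) := by
    have := hN _ ht
    omega
  have hmd : m * R.natDegree ≤ m * (n - 1) := Nat.mul_le_mul_left m hd
  have hℓ : (m + b) * (n - k) ≤ ℓ * (n - k) := Nat.mul_le_mul_right _ ht
  refine (Nat.add_le_add_right (natDegree_coeff_hasseDeriv_le Q b m) _).trans_lt ?_
  -- Once the truncated subtractions are cleared, this is `hℓ` rearranged.
  suffices (Q.coeff (m + b)).natDegree + m * R.natDegree + s * τ <
      ℓ * (n - k) + b + (s - b) * n by omega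
  zify [hτ, hk, hkn, hb.le, hk.trans hkn] at hc' hmd hℓ ⊢
  linarith

end GuruswamiSudan

theorem guruswami_sudan_univariate_reformulation_general
    (F : Type*) [Field F] (n k s ℓ τ : ℕ) (hk : 1 ≤ k) (hkn : k ≤ n)
    (α υ' : Fin n → F) (hα : Function.Injective α)
    (r : Fin n → F)
    (G : F[X]) (hG : G = ∏ i, (X - C (α i)))
    (R : F[X]) (hRdeg : R.degree < (n : ℕ))
    (hR : ∀ i, R.eval (α i) = r i / υ' i)
    (hN : ∀ t ≤ ℓ, 0 < s * (n - τ) - t * (k - 1))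
    (Q : Polynomial (Polynomial F)) (hQℓ : Q.degree ≤ (ℓ : ℕ))
    (hQd : ∀ t ≤ ℓ, (Q.coeff t).degree < ((s * (n - τ) - t * (k - 1) : ℕ) : WithBot ℕ)) :
    (∀ p : Fin n, ∀ i j : ℕ, i + j < s →
        ((((Q.comp (X + C (C (r p / υ' p)))).map
            ((aeval (X + C (α p) : F[X])).toRingHom)).coeff j).coeff i = 0)) ↔
      (∃ B : ℕ → F[X], ∀ b < s,
        (B b).degree < ((ℓ * (n - k) + b - s * τ : ℕ) : WithBot ℕ) ∧
          (Q.hasseDeriv b).eval R = B b * G ^ (s - b)) := by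
  have hGmonic : G.Monic := hG ▸ monic_prod_of_monic _ _ fun i _ => monic_X_sub_C (α i)
  have hGdeg : G.natDegree = n := by
    rw [hG, natDegree_prod_of_monic _ _ fun i _ => monic_X_sub_C (α i)]
    simp
  have hRα : ∀ p, X - C (α p) ∣ R - C (r p / υ' p) := fun p => hR p ▸ X_sub_C_dvd_sub_C_eval
  calc (∀ p : Fin n, ∀ i j : ℕ, i + j < s → _)
      ↔ ∀ p, ∀ j < s, (X - C (α p)) ^ (s - j) ∣ (Q.hasseDeriv j).eval (C (r p / υ' p)) :=
        forall_congr' fun p => forall_coeff_map_comp_X_add_C_eq_zero_iff Q _ _ s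
    _ ↔ ∀ p, ∀ j < s, (X - C (α p)) ^ (s - j) ∣ (Q.hasseDeriv j).eval R :=
        forall_congr' fun p => (forall_pow_sub_dvd_eval_hasseDeriv_iff_of_dvd_sub (hRα p)).symm
    _ ↔ ∀ j < s, G ^ (s - j) ∣ (Q.hasseDeriv j).eval R := by
        simp only [hG, prod_X_sub_C_pow_dvd_iff hα]
        exact ⟨fun h j hj p => h p j hj, fun h p j hj => h j hj p⟩
    _ ↔ _ := forall_pow_dvd_iff_exists_eq_mul_pow hGmonic fun b hb =>
        hGdeg ▸ GuruswamiSudan.degree_eval_hasseDeriv_lt hk hkn hRdeg hN hQℓ hQd hb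

/-- Univariate reformulation of the Guruswami–Sudan interpolation conditions
(multiplicity `s`, decoding radius `τ`, list size `ℓ`): a bivariate polynomial
`Q(x,y) = Σ_{t≤ℓ} Q^(t)(x)·y^t` (encoded in `F[x][y]`) with `deg Q^(t) < N_t`,
`N_t = s(n−τ)−t(k−1)`, has multiplicity at least `s` at every point
`(α_i, r_i/υ'_i)` iff there exist polynomials `B^(b)` with
`deg B^(b) < ℓ(n−k)−sτ+b` such that `Q^{[b]}(x,R(x)) = B^(b)(x)·G(x)^{s−b}`
for every `b ∈ {0,…,s−1}`. -/
theorem guruswami_sudan_univariate_reformulation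
    (F : Type*) [Field F] (n k s ℓ τ : ℕ) (hk : 1 ≤ k) (hkn : k ≤ n)
    (hs : 1 ≤ s) (hsℓ : s - 1 ≤ ℓ)
    (α υ' : Fin n → F) (hα : Function.Injective α) (hα0 : ∀ i, α i ≠ 0)
    (hυ' : ∀ i, υ' i ≠ 0)
    (r : Fin n → F)
    (G : F[X]) (hG : G = ∏ i, (X - C (α i)))
    (R : F[X]) (hRdeg : R.degree < (n : ℕ))
    (hR : ∀ i, R.eval (α i) = r i / υ' i)
    (hN : ∀ t ≤ ℓ, 0 < s * (n - τ) - t * (k - 1))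
    (Q : Polynomial (Polynomial F)) (hQℓ : Q.degree ≤ (ℓ : ℕ))
    (hQd : ∀ t ≤ ℓ, (Q.coeff t).degree < ((s * (n - τ) - t * (k - 1) : ℕ) : WithBot ℕ)) :
    (∀ p : Fin n, ∀ i j : ℕ, i + j < s →
        ((((Q.comp (X + C (C (r p / υ' p)))).map
            ((aeval (X + C (α p) : F[X])).toRingHom)).coeff j).coeff i = 0)) ↔
      (∃ B : ℕ → F[X], ∀ b < s,
        (B b).degree < ((ℓ * (n - k) + b - s * τ : ℕ) : WithBot ℕ) ∧
          (Q.hasseDeriv b).eval R = B b * G ^ (s - b)) :=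
  guruswami_sudan_univariate_reformulation_general F n k s ℓ τ hk hkn α υ' hα r G hG R hRdeg hR hN Q
    hQℓ hQd
end

section
/- Let S^(b,t) : ℕ → F for b ∈ {0,…,s−1}, t ∈ {0,…,ℓ} be sequences (encoding a Block-Hankel matrix via S^(b,t)_{i,j} = S^(b,t)(i+j)), and define the order ≺_V on pairs (b,i) by (b,i) ≺_V (b',i') iff i+bn < i'+b'n, or i+bn = i'+b'n and b < b'. Let T(x,y) = Σ_{t=0}^{ℓ} Σ_{j≥0} T^(t)_j x^j y^t and let (θ,κ) be a pair such that Σ_{t=0}^{ℓ} Σ_{j≥0} T^(t)_j · S^(b,t)(i+j) = 0 for every pair (b,i) with (b,i) ≺_V (θ,κ). Then the shifted polynomial T̄(x,y) = x·T(x,y), with coefficients T̄^(t)_j, satisfies Σ_{t=0}^{ℓ} Σ_{j≥0} T̄^(t)_j · S^(b,t)(i+j) = 0 for every pair (b,i) with (b,i+1) ≺_V (θ,κ). -/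
open Polynomial

lemma X_mul_sum_shift {F : Type*} [Field F] (p : F[X]) (f : ℕ → F → F)
    (hf : ∀ j, f j 0 = 0) :
    (X * p).sum f = p.sum (fun j c => f (j + 1) c) := by
  have hd : (X * p).natDegree < p.natDegree + 2 := by
    calc (X * p).natDegree ≤ X.natDegree + p.natDegree := Polynomial.natDegree_mul_le
      _ < p.natDegree + 2 := by simp [Polynomial.natDegree_X]; omega
  rw [Polynomial.sum_over_range' (X * p) hf (p.natDegree + 2) hd,
    Polynomial.sum_over_range' p (fun j => hf (j + 1)) (p.natDegree + 1) (Nat.lt_succ_self _),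
    Finset.sum_range_succ']
  simp [Polynomial.coeff_X_mul, Polynomial.mul_coeff_zero, hf]

/-- Initialization rule of the FIA adapted to the Block-Hankel syndrome matrix
of the reformulated Guruswami–Sudan interpolation problem: rows are indexed by
pairs `(b,i)` ordered by `≺_V` ((b,i) ≺_V (b',i') iff `i+bn < i'+b'n`, or
`i+bn = i'+b'n` and `b < b'`). If the connection polynomial
`T(x,y) = Σ_t T^(t)(x)·y^t` annihilates every row `(b,i) ≺_V (θ,κ)` of the band
`S^(b,t)_{i,j} = S^(b,t)(i+j)`, then the shifted polynomial `x·T(x,y)`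
annihilates every row `(b,i)` with `(b,i+1) ≺_V (θ,κ)`. -/
theorem fia_block_hankel_shift_rule
    (F : Type*) [Field F] (n s ℓ : ℕ) (hn : 1 ≤ n) (hs : 1 ≤ s) (hℓ : 1 ≤ ℓ)
    (S : ℕ → ℕ → ℕ → F)
    (T : ℕ → F[X]) (θ κ : ℕ)
    (h : ∀ b < s, ∀ i : ℕ,
      (i + b * n < κ + θ * n ∨ (i + b * n = κ + θ * n ∧ b < θ)) →
      ∑ t ∈ Finset.range (ℓ + 1), (T t).sum (fun j c => c * S b t (i + j)) = 0) :
    ∀ b < s, ∀ i : ℕ,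
      ((i + 1) + b * n < κ + θ * n ∨ ((i + 1) + b * n = κ + θ * n ∧ b < θ)) →
      ∑ t ∈ Finset.range (ℓ + 1), (X * T t).sum (fun j c => c * S b t (i + j)) = 0 := by
  intro b hb i hi
  have := h b hb (i + 1) hi
  rw [← this]
  refine Finset.sum_congr rfl fun t _ => ?_
  rw [X_mul_sum_shift _ _ (by simp)]
  unfold Polynomial.sum
  refine Finset.sum_congr rfl fun j _ => ?_
  have hij : i + (j + 1) = i + 1 + j := by omega
  simp only [hij]
end
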